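/- arXiv:1005.1151 — 3 statements merged into one kernel-verified Lean document; each statement's English description precedes it below -/
import Mathlib

section
/- It holds h^H(ℬ^H) ⊆ h(ℬ), where ℬ^H = {U ∈ ℝ^{k×m} : there is no x ∈ ℝ^n_+ with (L − UA)x ∈ (−K) \ {0}}, h^H(U) = Ub + Min((L − UA)(ℝ^n_+), K), and ℬ = {(λ, U, v) ∈ K*⁰ × ℝ^{k×m} × ℝ^k : λᵀv = 0, (L − UA)ᵀλ ∈ ℝ^n_+} with h(λ, U, v) = Ub + v. That is, for every U ∈ ℬ^H and every minimal element w of (L − UA)(ℝ^n_+) with respect to K, there exists (λ, U', v) ∈ ℬ with Ub + w = U'b + v. -/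
/-!
Put `M = L - U A` and let `w = M x₀` be `K`-minimal in `M(ℝⁿ₊)`. The cone `D` generated by the
columns of `M` and by `-w` meets `-K` only in `0`: if `M x - t w = -u` with `u ∈ K \ {0}`, then
`M ((x₀ + x) / (1 + t)) = w - u / (1 + t)` lies strictly below `w`. Being finitely generated, `D`
is closed, and `-K` has the compact convex base `-conv (K ∩ S)`, which misses `0` because `K` is
pointed. A hyperplane separating the two gives `l ≥ 0` on `D` with `l > 0` on `K \ {0}`, and then
`(l, U, w)` lies in `ℬ`: `l ⬝ᵥ w = 0` since `±w ∈ D`, and `(Mᵀ l)ᵢ = l ⬝ᵥ M eᵢ ≥ 0`.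
-/

open Set Module Matrix

theorem exists_nonneg_add_smul_eq_zero {ι : Type*} [Fintype ι] {c d : ι → ℝ} (hc : 0 ≤ c)
    (hd : ∃ j, d j < 0) : ∃ t : ℝ, ∃ j, d j < 0 ∧ 0 ≤ c + t • d ∧ (c + t • d) j = 0 := by
  classical
  obtain ⟨j, hj, hmin⟩ := Finset.exists_min_image {i | d i < 0} (fun i => c i / -d i)
    (by obtain ⟨j, hj⟩ := hd; exact ⟨j, by simpa using hj⟩)
  rw [Finset.mem_filter_univ] at hj
  refine ⟨c j / -d j, j, hj, fun i => ?_, ?_⟩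
  · have ht : 0 ≤ c j / -d j := div_nonneg (hc j) (by linarith)
    simp only [Pi.zero_apply, Pi.add_apply, Pi.smul_apply, smul_eq_mul]
    rcases lt_or_ge (d i) 0 with hi | hi
    · have := hmin i (by simpa using hi)
      rw [le_div_iff₀ (by linarith)] at this
      linarith
    · have hci : 0 ≤ c i := hc i
      linarith [mul_nonneg ht hi]
  · have := hj.ne
    simp only [Pi.add_apply, Pi.smul_apply, smul_eq_mul]
    field_simp
    ring

theorem isClosed_setOf_nonneg_supported {ι : Type*} (s : Finset ι) :
    IsClosed {c : ι → ℝ | 0 ≤ c ∧ ∀ i ∉ s, c i = 0} := by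
  simp only [ofPred_and, ofPred_forall]
  exact isClosed_Ici.inter <| isClosed_iInter fun i => isClosed_iInter fun _ =>
    isClosed_eq (continuous_apply i) continuous_const

section FinitelyGeneratedCone

variable {ι E : Type*} [Fintype ι] [AddCommGroup E] [Module ℝ E]

theorem LinearMap.image_nonneg_eq_biUnion (φ : (ι → ℝ) →ₗ[ℝ] E) (s : Finset ι) {d : ι → ℝ}
    (hds : ∀ i ∉ s, d i = 0) (hφd : φ d = 0) (hd : ∃ j, d j < 0) [DecidableEq ι] :
    φ '' {c | 0 ≤ c ∧ ∀ i ∉ s, c i = 0} =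
      ⋃ j ∈ Finset.univ.filter (d · < 0), φ '' {c | 0 ≤ c ∧ ∀ i ∉ s.erase j, c i = 0} := by
  refine Subset.antisymm ?_ (iUnion₂_subset fun j _ => image_mono fun c ⟨hc, hcs⟩ =>
    ⟨hc, fun i hi => hcs i fun h => hi (Finset.mem_of_mem_erase h)⟩)
  rintro _ ⟨c, ⟨hc, hcs⟩, rfl⟩
  obtain ⟨t, j, hj, hc', hcj⟩ := exists_nonneg_add_smul_eq_zero hc hd
  refine mem_biUnion (x := j) (by simpa using hj)
    ⟨c + t • d, ⟨hc', fun i hi => ?_⟩, by simp [hφd]⟩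
  rcases eq_or_ne i j with rfl | hij
  · exact hcj
  · have hi : i ∉ s := fun h => hi (Finset.mem_erase.2 ⟨hij, h⟩)
    simp [hcs i hi, hds i hi]

variable [TopologicalSpace E] [IsTopologicalAddGroup E] [ContinuousSMul ℝ E] [T2Space E]

theorem LinearMap.isClosed_image_nonneg_of_injOn (φ : (ι → ℝ) →ₗ[ℝ] E) (s : Finset ι)
    (hφ : ∀ d, (∀ i ∉ s, d i = 0) → φ d = 0 → d = 0) :
    IsClosed (φ '' {c | 0 ≤ c ∧ ∀ i ∉ s, c i = 0}) := by
  set V : Submodule ℝ (ι → ℝ) := Submodule.pi (↑s)ᶜ fun _ => ⊥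
  have hV : ∀ c, c ∈ V ↔ ∀ i ∉ s, c i = 0 := by simp [V]
  have hker : LinearMap.ker (φ.domRestrict V) = ⊥ :=
    LinearMap.ker_eq_bot'.2 fun d hd => Subtype.ext <| hφ d ((hV d).1 d.2) hd
  have himage : φ '' {c | 0 ≤ c ∧ ∀ i ∉ s, c i = 0} =
      φ.domRestrict V '' (Subtype.val ⁻¹' {c | 0 ≤ c ∧ ∀ i ∉ s, c i = 0}) := by
    ext x
    constructor
    · rintro ⟨c, hc, rfl⟩
      exact ⟨⟨c, (hV c).2 hc.2⟩, hc, rfl⟩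
    · rintro ⟨c, hc, rfl⟩
      exact ⟨c, hc, rfl⟩
  rw [himage]
  exact (LinearMap.isClosedEmbedding_of_injective hker).isClosedMap _
    ((isClosed_setOf_nonneg_supported s).preimage continuous_subtype_val)

theorem LinearMap.isClosed_image_nonneg_supported [FiniteDimensional ℝ E] (φ : (ι → ℝ) →ₗ[ℝ] E)
    (s : Finset ι) :
    IsClosed (φ '' {c | 0 ≤ c ∧ ∀ i ∉ s, c i = 0}) := by
  classical
  induction s using Finset.strongInduction with
  | H s ih =>
  by_cases hφ : ∀ d, (∀ i ∉ s, d i = 0) → φ d = 0 → d = 0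
  · exact φ.isClosed_image_nonneg_of_injOn s hφ
  push Not at hφ
  obtain ⟨d, hds, hφd, hd⟩ := hφ
  obtain ⟨d, hds, hφd, hneg⟩ : ∃ d : ι → ℝ, (∀ i ∉ s, d i = 0) ∧ φ d = 0 ∧ ∃ j, d j < 0 := by
    obtain ⟨j, hj⟩ := Function.ne_iff.1 hd
    rcases hj.lt_or_gt with hj | hj
    · exact ⟨d, hds, hφd, j, hj⟩
    · exact ⟨-d, by simpa using hds, by simp [hφd], j, by simpa using hj⟩
  rw [φ.image_nonneg_eq_biUnion s hds hφd hneg]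
  refine isClosed_biUnion_finset fun j hj => ih _ (Finset.erase_ssubset ?_)
  by_contra hjs
  simp [hds j hjs] at hj

theorem LinearMap.isClosed_image_nonneg [FiniteDimensional ℝ E] (φ : (ι → ℝ) →ₗ[ℝ] E) :
    IsClosed (φ '' {c | 0 ≤ c}) := by
  simpa using φ.isClosed_image_nonneg_supported Finset.univ

def ProperCone.mapPositive [FiniteDimensional ℝ E] (φ : (ι → ℝ) →ₗ[ℝ] E) : ProperCone ℝ E where
  toSubmodule := (PointedCone.positive ℝ (ι → ℝ)).map φ
  isClosed' := φ.isClosed_image_nonneg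

end FinitelyGeneratedCone

section ConvexHull

variable {E : Type*} [NormedAddCommGroup E] [NormedSpace ℝ E] [FiniteDimensional ℝ E]

theorem convexHull_eq_biUnion_image_stdSimplex (s : Set E) :
    convexHull ℝ s = ⋃ n ∈ Finset.range (finrank ℝ E + 2),
      (fun p : (Fin n → ℝ) × (Fin n → E) => ∑ i, p.1 i • p.2 i) ''
        (stdSimplex ℝ (Fin n) ×ˢ univ.pi fun _ => s) := by
  refine Subset.antisymm (fun x hx => ?_) ?_
  · obtain ⟨ι, _, z, w, hzs, hz, hw0, hw1, rfl⟩ := eq_pos_convex_span_of_mem_convexHull hx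
    have hcard : Fintype.card ι < finrank ℝ E + 2 :=
      Nat.lt_succ_of_le <| hz.card_le_finrank_succ.trans <| by
        have := Submodule.finrank_le (vectorSpan ℝ (range z)); omega
    let e := Fintype.equivFin ι
    refine mem_biUnion (Finset.mem_range.2 hcard) ⟨(w ∘ e.symm, z ∘ e.symm),
      ⟨⟨fun i => (hw0 _).le, by simpa [e.symm.sum_comp] using hw1⟩,
        fun i _ => hzs (mem_range_self _)⟩, ?_⟩
    exact e.symm.sum_comp (fun i => w i • z i)
  · refine iUnion₂_subset fun n _ => ?_
    rintro _ ⟨⟨w, z⟩, ⟨⟨hw0, hw1⟩, hz⟩, rfl⟩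
    exact (convex_convexHull ℝ s).sum_mem (fun i _ => hw0 i) hw1
      (fun i _ => subset_convexHull ℝ s (hz i (mem_univ i)))

theorem IsCompact.convexHull {s : Set E} (hs : IsCompact s) : IsCompact (convexHull ℝ s) := by
  rw [convexHull_eq_biUnion_image_stdSimplex]
  exact (Finset.range _).isCompact_biUnion fun n _ =>
    ((isCompact_stdSimplex ℝ (Fin n)).prod (isCompact_univ_pi fun _ => hs)).image (by fun_prop)

end ConvexHull

theorem add_mem_of_convex_of_smul_mem {E : Type*} [AddCommGroup E] [Module ℝ E] {K : Set E}
    (hKcone : ∀ c : ℝ, 0 ≤ c → ∀ x ∈ K, c • x ∈ K) (hKconvex : Convex ℝ K) {x y : E}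
    (hx : x ∈ K) (hy : y ∈ K) : x + y ∈ K := by
  have := hKcone 2 zero_le_two _ (hKconvex hx hy (by norm_num : (0 : ℝ) ≤ 1 / 2)
    (by norm_num : (0 : ℝ) ≤ 1 / 2) (by norm_num))
  rwa [smul_add, smul_smul, smul_smul, show (2 : ℝ) * (1 / 2) = 1 by norm_num, one_smul,
    one_smul] at this

section SalientCone

variable {E : Type*} [NormedAddCommGroup E] [NormedSpace ℝ E] {K : Set E}

theorem zero_notMem_convexHull_inter_sphere (hKcone : ∀ c : ℝ, 0 ≤ c → ∀ x ∈ K, c • x ∈ K)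
    (hKconvex : Convex ℝ K) (hKpointed : K ∩ -K = {0}) :
    (0 : E) ∉ convexHull ℝ (K ∩ Metric.sphere 0 1) := by
  classical
  intro h0
  obtain ⟨ι, _, w, z, hw0, hw1, hz, hsum⟩ := mem_convexHull_iff_exists_fintype.1 h0
  obtain ⟨j, hj⟩ : ∃ j, w j ≠ 0 := by
    by_contra! h
    simp [h] at hw1
  have h0K : (0 : E) ∈ K := (hKpointed.symm ▸ rfl : (0 : E) ∈ K ∩ -K).1
  have hrest : ∑ i ∈ Finset.univ.erase j, w i • z i ∈ K :=
    Finset.sum_induction _ (· ∈ K) (fun _ _ => add_mem_of_convex_of_smul_mem hKcone hKconvex)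
      h0K fun i _ => hKcone _ (hw0 i) _ (hz i).1
  have hsplit : w j • z j = -∑ i ∈ Finset.univ.erase j, w i • z i :=
    eq_neg_of_add_eq_zero_left ((Finset.add_sum_erase _ _ (Finset.mem_univ j)).trans hsum)
  have hmem : w j • z j ∈ K ∩ -K :=
    ⟨hKcone _ (hw0 j) _ (hz j).1, by rwa [hsplit, mem_neg, neg_neg]⟩
  rw [hKpointed, mem_singleton_iff, smul_eq_zero] at hmem
  have := (hz j).2
  rcases hmem with h | h
  · exact hj h
  · simp [h] at this

theorem ProperCone.hyperplane_separation_of_salient [FiniteDimensional ℝ E] (D : ProperCone ℝ E)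
    (hKcone : ∀ c : ℝ, 0 ≤ c → ∀ x ∈ K, c • x ∈ K) (hKclosed : IsClosed K)
    (hKconvex : Convex ℝ K) (hKpointed : K ∩ -K = {0}) (hDK : ∀ x ∈ D, -x ∈ K → x = 0) :
    ∃ f : StrongDual ℝ E, (∀ x ∈ D, 0 ≤ f x) ∧ ∀ u ∈ K, u ≠ 0 → 0 < f u := by
  set B := convexHull ℝ (K ∩ Metric.sphere 0 1)
  have hBK : B ⊆ K := convexHull_min inter_subset_left hKconvex
  have hB0 : (0 : E) ∉ B := zero_notMem_convexHull_inter_sphere hKcone hKconvex hKpointed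
  have hBD : Disjoint (-B) D := disjoint_left.2 fun q hqB hqD => by
    obtain rfl := hDK q hqD (hBK hqB)
    exact hB0 (by simpa using hqB)
  obtain ⟨f, hfD, hfB⟩ := D.hyperplane_separation (convex_convexHull ℝ _).neg
    ((isCompact_sphere 0 1).inter_left hKclosed).convexHull.neg hBD
  refine ⟨f, hfD, fun u hu hu0 => ?_⟩
  have hunit : ‖u‖⁻¹ • u ∈ B :=
    subset_convexHull ℝ _ ⟨hKcone _ (by positivity) _ hu, by simp [norm_smul, hu0]⟩
  have := hfB _ (neg_mem_neg.2 hunit)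
  rw [map_neg, map_smul, smul_eq_mul, neg_lt_zero] at this
  exact pos_of_mul_pos_right this (by positivity)

end SalientCone

theorem Matrix.mulVec_sub_smul_eq_zero_of_minimal {m n : Type*} [Fintype n]
    {M : Matrix m n ℝ} {K : Set (m → ℝ)} (hKcone : ∀ c : ℝ, 0 ≤ c → ∀ x ∈ K, c • x ∈ K)
    {x₀ : n → ℝ} (hx₀ : ∀ i, 0 ≤ x₀ i)
    (hmin : ¬ ∃ w' : m → ℝ, (∃ x : n → ℝ, (∀ i, 0 ≤ x i) ∧ M *ᵥ x = w') ∧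
        M *ᵥ x₀ - w' ∈ K ∧ M *ᵥ x₀ - w' ≠ 0)
    {x : n → ℝ} (hx : ∀ i, 0 ≤ x i) {t : ℝ} (ht : 0 ≤ t)
    (hK : -(M *ᵥ x - t • M *ᵥ x₀) ∈ K) : M *ᵥ x - t • M *ᵥ x₀ = 0 := by
  by_contra hne
  have ht' : 0 < 1 + t := by linarith
  refine hmin ⟨_, ⟨(1 + t)⁻¹ • (x₀ + x), fun i => ?_, rfl⟩, ?_⟩
  · simp only [Pi.smul_apply, Pi.add_apply, smul_eq_mul]
    have := hx₀ i; have := hx i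
    positivity
  · have heq : M *ᵥ x₀ - M *ᵥ ((1 + t)⁻¹ • (x₀ + x)) = (1 + t)⁻¹ • -(M *ᵥ x - t • M *ᵥ x₀) := by
      have : (1 + t)⁻¹ * (1 + t) = 1 := inv_mul_cancel₀ ht'.ne'
      rw [mulVec_smul, mulVec_add]
      linear_combination (norm := module) (-this) • M *ᵥ x₀
    rw [heq]
    exact ⟨hKcone _ (by positivity) _ hK, smul_ne_zero (by positivity) (neg_ne_zero.2 hne)⟩

theorem stmt11_general (k n m : ℕ) (K : Set (Fin k → ℝ))
    (hKcone : ∀ (c : ℝ), 0 ≤ c → ∀ x ∈ K, c • x ∈ K)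
    (hKclosed : IsClosed K) (hKconvex : Convex ℝ K)
    (hKpointed : K ∩ (-K) = {0})
    (L : Matrix (Fin k) (Fin n) ℝ) (A : Matrix (Fin m) (Fin n) ℝ) (b : Fin m → ℝ)
    (U : Matrix (Fin k) (Fin m) ℝ)
    (w : Fin k → ℝ)
    (hw : (∃ x : Fin n → ℝ, (∀ i, 0 ≤ x i) ∧ (L - U * A) *ᵥ x = w) ∧
      ¬ ∃ w' : Fin k → ℝ, (∃ x : Fin n → ℝ, (∀ i, 0 ≤ x i) ∧ (L - U * A) *ᵥ x = w') ∧
        w - w' ∈ K ∧ w - w' ≠ 0) :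
    ∃ (l : Fin k → ℝ) (U' : Matrix (Fin k) (Fin m) ℝ) (v : Fin k → ℝ),
      ((∀ u ∈ K, u ≠ 0 → 0 < l ⬝ᵥ u) ∧ l ⬝ᵥ v = 0 ∧
        ∀ i, 0 ≤ ((L - U' * A)ᵀ *ᵥ l) i) ∧
      U *ᵥ b + w = U' *ᵥ b + v := by
  obtain ⟨⟨x₀, hx₀, rfl⟩, hmin⟩ := hw
  set M := L - U * A
  -- `φ c = M (c ∘ some) - c none • w`, so `φ` maps the orthant onto the cone generated by the
  -- columns of `M` and by `-w`.
  let φ : (Option (Fin n) → ℝ) →ₗ[ℝ] Fin k → ℝ :=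
    M.mulVecLin ∘ₗ LinearMap.funLeft ℝ ℝ some - (LinearMap.proj none).smulRight (M *ᵥ x₀)
  obtain ⟨f, hfD, hfK⟩ := (ProperCone.mapPositive φ).hyperplane_separation_of_salient hKcone
    hKclosed hKconvex hKpointed <| by
      rintro _ ⟨c, hc, rfl⟩ hK
      exact M.mulVec_sub_smul_eq_zero_of_minimal hKcone hx₀ hmin (fun i => hc (some i))
        (hc none) hK
  have hf_nonneg : ∀ x : Fin n → ℝ, 0 ≤ x → ∀ t : ℝ, 0 ≤ t → 0 ≤ f (M *ᵥ x - t • M *ᵥ x₀) :=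
    fun x hx t ht => hfD _ ⟨fun o => o.elim t x, by rintro (_ | i); exacts [ht, hx i], rfl⟩
  set l := (dotProductEquiv ℝ (Fin k)).symm (f : (Fin k → ℝ) →ₗ[ℝ] ℝ)
  have hl : ∀ v, l ⬝ᵥ v = f v :=
    LinearMap.congr_fun ((dotProductEquiv ℝ (Fin k)).apply_symm_apply _)
  refine ⟨l, U, M *ᵥ x₀, ⟨fun u hu hu0 => (hl u).symm ▸ hfK u hu hu0, ?_, fun i => ?_⟩, rfl⟩
  · have hw := hf_nonneg x₀ hx₀ 0 le_rfl
    have hnw := hf_nonneg 0 le_rfl 1 zero_le_one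
    simp only [zero_smul, sub_zero, mulVec_zero, one_smul, zero_sub, map_neg] at hw hnw
    rw [hl]
    linarith
  · have hcol := hf_nonneg (Pi.single i 1) (Pi.single_nonneg.2 zero_le_one) 0 le_rfl
    rwa [zero_smul, sub_zero, ← hl, dotProduct_mulVec, dotProduct_single_one,
      ← mulVec_transpose] at hcol

theorem stmt11 (k n m : ℕ) (K : Set (Fin k → ℝ))
    (hKcone : ∀ (c : ℝ), 0 ≤ c → ∀ x ∈ K, c • x ∈ K)
    (hKclosed : IsClosed K) (hKconvex : Convex ℝ K)
    (hKpointed : K ∩ (-K) = {0})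
    (hKne : K ≠ {0}) (hKuniv : K ≠ Set.univ)
    (L : Matrix (Fin k) (Fin n) ℝ) (A : Matrix (Fin m) (Fin n) ℝ) (b : Fin m → ℝ)
    (U : Matrix (Fin k) (Fin m) ℝ)
    (hU : ¬ ∃ x : Fin n → ℝ, (∀ i, 0 ≤ x i) ∧
      (L - U * A) *ᵥ x ∈ (-K) ∧ (L - U * A) *ᵥ x ≠ 0)
    (w : Fin k → ℝ)
    (hw : (∃ x : Fin n → ℝ, (∀ i, 0 ≤ x i) ∧ (L - U * A) *ᵥ x = w) ∧
      ¬ ∃ w' : Fin k → ℝ, (∃ x : Fin n → ℝ, (∀ i, 0 ≤ x i) ∧ (L - U * A) *ᵥ x = w') ∧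
        w - w' ∈ K ∧ w - w' ≠ 0) :
    ∃ (l : Fin k → ℝ) (U' : Matrix (Fin k) (Fin m) ℝ) (v : Fin k → ℝ),
      ((∀ u ∈ K, u ≠ 0 → 0 < l ⬝ᵥ u) ∧ l ⬝ᵥ v = 0 ∧
        ∀ i, 0 ≤ ((L - U' * A)ᵀ *ᵥ l) i) ∧
      U *ᵥ b + w = U' *ᵥ b + v :=
  stmt11_general k n m K hKcone hKclosed hKconvex hKpointed L A b U w hw
end

section
/- Let K ⊆ ℝ^k be a nontrivial pointed closed convex cone, 𝒜 = {x ∈ ℝ^n_+ : Ax = b} nonempty, and suppose {Lx : x ∈ ℝ^n_+, Ax = 0} ∩ (−K) = {0}. Then L(𝒜) + K is a closed convex set. -/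
open Matrix Pointwise

open Filter Topology

/-!
Homogenize: `H = {(L x, t) | x ≥ 0, t ≥ 0, A x = t b}` is the slice at `0` of the finitely
generated cone spanned by `((L eᵢ, 0), A eᵢ)` and `((0, 1), -b)`, and finitely generated cones are
closed (by Carathéodory they are finite unions of injective linear images of orthants). The slice
`t = 1` of `H` is `L(𝒜)`, hence closed; since `H` is a closed cone, every asymptotic direction of
`L(𝒜)` lies in the slice `t = 0`, the recession cone `{L x | x ≥ 0, A x = 0}`.

If `sⱼ + qⱼ → w` with `sⱼ ∈ L(𝒜)` and `qⱼ ∈ K`, either `(qⱼ)` is bounded and a convergent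
subsequence puts `w` in `L(𝒜) + K`, or `qⱼ / ‖qⱼ‖` accumulates at a unit vector `u ∈ K` such that
`-u` is an asymptotic direction of `L(𝒜)`, which the hypothesis on the recession cone forbids.
-/

section Caratheodory

variable {ι E : Type*} [DecidableEq ι] [AddCommGroup E] [Module ℝ E]

/-- Subtract from `c` the largest multiple of the relation `g` keeping it nonnegative on `s`; the
coefficient at the minimiser `j` of `c i / g i` then vanishes. -/
theorem exists_erase_nonneg_repr (v : ι → E) {s : Finset ι} {c g : ι → ℝ}
    (hc : ∀ i ∈ s, 0 ≤ c i) (hg : ∑ i ∈ s, g i • v i = 0) (hpos : ∃ i ∈ s, 0 < g i) :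
    ∃ j ∈ s, ∃ c' : ι → ℝ, (∀ i ∈ s, 0 ≤ c' i) ∧
      ∑ i ∈ s.erase j, c' i • v i = ∑ i ∈ s, c i • v i := by
  obtain ⟨j, hjpos, hjmin⟩ := Finset.exists_min_image (s.filter (0 < g ·)) (fun i ↦ c i / g i)
    (by simpa [Finset.filter_nonempty_iff] using hpos)
  obtain ⟨hj, hgj⟩ := Finset.mem_filter.1 hjpos
  set τ := c j / g j
  have hτ : 0 ≤ τ := div_nonneg (hc j hj) hgj.le
  refine ⟨j, hj, fun i ↦ c i - τ * g i, fun i hi ↦ ?_, ?_⟩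
  · rcases lt_or_ge 0 (g i) with hgi | hgi
    · have := hjmin i (Finset.mem_filter.2 ⟨hi, hgi⟩)
      rw [le_div_iff₀ hgi] at this
      linarith
    · nlinarith [hc i hi]
  · have hcj : c j - τ * g j = 0 := by simp [τ, hgj.ne']
    rw [Finset.sum_erase s (f := fun i ↦ (c i - τ * g i) • v i)
      (by simp only [hcj, zero_smul])]
    simp only [sub_smul, mul_smul, Finset.sum_sub_distrib, ← Finset.smul_sum, hg, smul_zero,
      sub_zero]

/-- Conic Carathéodory theorem. -/
theorem exists_linearIndepOn_nonneg_repr (v : ι → E) (s : Finset ι) (c : ι → ℝ)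
    (hc : ∀ i ∈ s, 0 ≤ c i) :
    ∃ t ⊆ s, LinearIndepOn ℝ v (t : Set ι) ∧
      ∃ d : t → ℝ, 0 ≤ d ∧ ∑ i, d i • v i = ∑ i ∈ s, c i • v i := by
  induction s using Finset.strongInduction generalizing c with
  | _ s ih =>
    by_cases hli : LinearIndepOn ℝ v (s : Set ι)
    · exact ⟨s, subset_rfl, hli, fun i ↦ c i, fun i ↦ hc i i.2,
        Finset.sum_coe_sort s fun i ↦ c i • v i⟩
    obtain ⟨g, hg, hpos⟩ : ∃ g : ι → ℝ, ∑ i ∈ s, g i • v i = 0 ∧ ∃ i ∈ s, 0 < g i := by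
      obtain ⟨g, hg, i, hi, hgi⟩ := not_linearIndepOn_finset_iff.1 hli
      rcases hgi.lt_or_gt with hgi | hgi
      · exact ⟨-g, by simp [neg_smul, hg], i, hi, by simpa using hgi⟩
      · exact ⟨g, hg, i, hi, hgi⟩
    obtain ⟨j, hj, c', hc', hsum⟩ := exists_erase_nonneg_repr v hc hg hpos
    obtain ⟨t, hts, ht, d, hd, hd_sum⟩ := ih (s.erase j) (Finset.erase_ssubset hj) c'
      fun i hi ↦ hc' i (Finset.mem_of_mem_erase hi)
    exact ⟨t, hts.trans (Finset.erase_subset j s), ht, d, hd, hd_sum.trans hsum⟩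

end Caratheodory

theorem LinearMap.isClosed_image_Ici_zero {ι E : Type*} [Fintype ι] [NormedAddCommGroup E]
    [NormedSpace ℝ E] (f : (ι → ℝ) →ₗ[ℝ] E) : IsClosed (f '' Set.Ici 0) := by
  classical
  set v : ι → E := fun i ↦ f (Pi.single i 1)
  have hf : ∀ x, f x = ∑ i, x i • v i := fun x ↦ by
    conv_lhs => rw [pi_eq_sum_univ' x]
    simp only [v, map_sum, map_smul]
  have : f '' Set.Ici 0 = ⋃ t ∈ {t : Finset ι | LinearIndepOn ℝ v (t : Set ι)},
      Fintype.linearCombination ℝ (fun i : t ↦ v i) '' Set.Ici 0 := by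
    ext y
    simp only [Set.mem_iUnion, Set.mem_image, Set.mem_ofPred_eq, exists_prop]
    constructor
    · rintro ⟨x, hx, rfl⟩
      obtain ⟨t, -, ht, d, hd, hsum⟩ := exists_linearIndepOn_nonneg_repr v Finset.univ x
        fun i _ ↦ hx i
      exact ⟨t, ht, d, hd, by rw [Fintype.linearCombination_apply, hsum, hf]⟩
    · rintro ⟨t, -, d, hd, rfl⟩
      refine ⟨∑ i : t, d i • Pi.single (i : ι) 1,
        Set.mem_Ici.2 <| Finset.sum_nonneg fun i _ ↦
          smul_nonneg (hd i) (Pi.single_nonneg.2 zero_le_one), ?_⟩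
      simp [v, Fintype.linearCombination_apply, map_sum]
  rw [this]
  refine (Set.toFinite _).isClosed_biUnion fun t ht ↦ ?_
  exact (LinearMap.isClosedEmbedding_of_injective (LinearMap.ker_eq_bot.2
    (LinearIndependent.fintypeLinearCombination_injective ht))).isClosedMap _ isClosed_Ici

theorem asymptoticCone_setOf_mk_one_subset {E : Type*} [AddCommGroup E] [Module ℝ E]
    [TopologicalSpace E] [IsTopologicalAddGroup E] [ContinuousSMul ℝ E] {H : Set (E × ℝ)}
    (hH : IsClosed H) (hHcone : ∀ c : ℝ, 0 ≤ c → ∀ z ∈ H, c • z ∈ H) :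
    asymptoticCone ℝ {w | (w, 1) ∈ H} ⊆ {w | (w, 0) ∈ H} := by
  intro v hv
  rw [mem_asymptoticCone_iff, AffineSpace.asymptoticNhds_eq_smul, ← map₂_smul,
    ← map_prod_eq_map₂, frequently_map] at hv
  refine hH.mem_of_frequently_of_tendsto (hv.mp ?_)
    (tendsto_snd.prodMk_nhds tendsto_fst.inv_tendsto_atTop)
  filter_upwards [tendsto_fst.eventually (eventually_gt_atTop 0)] with ⟨c, u⟩ hc h
  simpa [hc.ne'] using hHcone c⁻¹ (inv_nonneg.2 hc.le) _ h

section NormedSpace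

variable {E : Type*} [NormedAddCommGroup E] [NormedSpace ℝ E] [ProperSpace E] {S K : Set E}

theorem exists_neg_mem_asymptoticCone_of_unbounded (hK : IsClosed K)
    (hKcone : ∀ c : ℝ, 0 ≤ c → ∀ x ∈ K, c • x ∈ K) {s q : ℕ → E} (hs : ∀ j, s j ∈ S)
    (hq : ∀ j, q j ∈ K) (hbdd : ∃ C, ∀ j, ‖s j + q j‖ ≤ C) (hunbdd : ∀ j : ℕ, (j : ℝ) < ‖q j‖) :
    ∃ u ∈ K, ‖u‖ = 1 ∧ -u ∈ asymptoticCone ℝ S := by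
  have hq_pos : ∀ j, 0 < ‖q j‖ := fun j ↦ (Nat.cast_nonneg j).trans_lt (hunbdd j)
  have hq_top : Tendsto (‖q ·‖) atTop atTop :=
    tendsto_atTop_mono (fun j ↦ (hunbdd j).le) tendsto_natCast_atTop_atTop
  have hsphere : ∀ j, ‖q j‖⁻¹ • q j ∈ Metric.sphere (0 : E) 1 := fun j ↦ by
    simp [norm_smul, (hq_pos j).ne']
  obtain ⟨u, hu, φ, hφ, hlim⟩ := (isCompact_sphere (0 : E) 1).tendsto_subseq hsphere
  have hφ_top := hq_top.comp hφ.tendsto_atTop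
  obtain ⟨C, hC⟩ := hbdd
  have hsq : Tendsto (fun j ↦ ‖q (φ j)‖⁻¹ • (s (φ j) + q (φ j))) atTop (𝓝 0) :=
    hφ_top.inv_tendsto_atTop.zero_smul_isBoundedUnder_le (isBoundedUnder_of ⟨C, fun j ↦ hC _⟩)
  have hs_dir : Tendsto (fun j ↦ ‖q (φ j)‖⁻¹ • s (φ j)) atTop (𝓝 (-u)) := by
    simpa [smul_add] using hsq.sub hlim
  refine ⟨u, hK.mem_of_tendsto hlim (.of_forall fun j ↦ hKcone _ (by positivity) _ (hq _)),
    by simpa using hu, ?_⟩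
  refine (hφ_top.atTop_smul_nhds_tendsto_asymptoticNhds hs_dir).frequently
    (.of_forall fun j ↦ ?_)
  simpa [smul_smul, (hq_pos _).ne'] using hs (φ j)

theorem IsClosed.add_of_asymptoticCone_inter_neg_subset (hS : IsClosed S) (hK : IsClosed K)
    (hKcone : ∀ c : ℝ, 0 ≤ c → ∀ x ∈ K, c • x ∈ K) (h : asymptoticCone ℝ S ∩ -K ⊆ {0}) :
    IsClosed (S + K) := by
  rw [← isSeqClosed_iff_isClosed]
  intro p w hp hpw
  choose s hs q hq hsq using fun j ↦ Set.mem_add.1 (hp j)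
  by_cases hbdd : ∃ C, ∀ j, ‖q j‖ ≤ C
  · obtain ⟨C, hC⟩ := hbdd
    obtain ⟨q₀, -, φ, hφ, hq₀⟩ := tendsto_subseq_of_bounded Metric.isBounded_closedBall
      fun j ↦ mem_closedBall_zero_iff.2 (hC j)
    have hs_lim : Tendsto (s ∘ φ) atTop (𝓝 (w - q₀)) := by
      convert (hpw.comp hφ.tendsto_atTop).sub hq₀ using 1
      ext j; simp [← hsq]
    have hw : w - q₀ ∈ S := hS.mem_of_tendsto hs_lim (.of_forall fun j ↦ hs _)
    have hq₀K : q₀ ∈ K := hK.mem_of_tendsto hq₀ (.of_forall fun j ↦ hq _)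
    simpa using Set.add_mem_add hw hq₀K
  · push Not at hbdd
    choose ψ hψ using fun j : ℕ ↦ hbdd j
    obtain ⟨C, hC⟩ := hpw.norm.bddAbove_range
    obtain ⟨u, huK, hu, hu_asym⟩ := exists_neg_mem_asymptoticCone_of_unbounded hK hKcone
      (fun j ↦ hs (ψ j)) (fun j ↦ hq (ψ j)) ⟨C, fun j ↦ hsq (ψ j) ▸ hC ⟨ψ j, rfl⟩⟩ hψ
    have : -u = 0 := h ⟨hu_asym, Set.neg_mem_neg.2 huK⟩
    simp [neg_eq_zero.1 this] at hu

end NormedSpace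

section Homogenization

variable {ι E F : Type*} [NormedAddCommGroup E] [NormedSpace ℝ E]
  [NormedAddCommGroup F] [NormedSpace ℝ F] (f : (ι → ℝ) →ₗ[ℝ] E) (g : (ι → ℝ) →ₗ[ℝ] F) (b : F)

def homogenization : Set (E × ℝ) :=
  {p | 0 ≤ p.2 ∧ ∃ x, 0 ≤ x ∧ g x = p.2 • b ∧ f x = p.1}

theorem setOf_mk_mem_homogenization {t : ℝ} (ht : 0 ≤ t) :
    {w | (w, t) ∈ homogenization f g b} = f '' (Set.Ici 0 ∩ g ⁻¹' {t • b}) := by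
  ext w
  simp [homogenization, ht, and_assoc]

theorem smul_mem_homogenization {c : ℝ} (hc : 0 ≤ c) {p : E × ℝ}
    (hp : p ∈ homogenization f g b) : c • p ∈ homogenization f g b := by
  obtain ⟨ht, x, hx, hgx, hfx⟩ := hp
  exact ⟨mul_nonneg hc ht, c • x, smul_nonneg hc hx, by simp [hgx, smul_smul], by simp [hfx]⟩

theorem isClosed_homogenization [Fintype ι] : IsClosed (homogenization f g b) := by
  set Φ : (ι ⊕ Unit → ℝ) →ₗ[ℝ] (E × ℝ) × F :=
    ((f ∘ₗ LinearMap.funLeft ℝ ℝ Sum.inl).prod (LinearMap.proj (Sum.inr ()))).prod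
      (g ∘ₗ LinearMap.funLeft ℝ ℝ Sum.inl - (LinearMap.proj (Sum.inr ())).smulRight b)
  have hΦ_apply : ∀ y, Φ y =
      ((f (y ∘ Sum.inl), y (Sum.inr ())), g (y ∘ Sum.inl) - y (Sum.inr ()) • b) := fun _ ↦ rfl
  have : homogenization f g b = (fun p ↦ (p, (0 : F))) ⁻¹' (Φ '' Set.Ici 0) := by
    ext ⟨w, t⟩
    simp only [homogenization, Set.mem_preimage, Set.mem_image, Set.mem_Ici, hΦ_apply,
      Prod.mk.injEq, sub_eq_zero]
    constructor
    · rintro ⟨ht, x, hx, hgx, hfx⟩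
      refine ⟨Sum.elim x fun _ ↦ t, fun i ↦ ?_, ?_⟩
      · rcases i with i | -
        exacts [hx i, ht]
      · exact ⟨⟨hfx, rfl⟩, hgx⟩
    · rintro ⟨y, hy, hΦ⟩
      obtain ⟨⟨hfy, rfl⟩, hgy⟩ := hΦ
      exact ⟨hy _, y ∘ Sum.inl, fun i ↦ hy _, hgy, hfy⟩
  rw [this]
  exact Φ.isClosed_image_Ici_zero.preimage (by fun_prop)

theorem isClosed_image_polyhedron [Fintype ι] : IsClosed (f '' (Set.Ici 0 ∩ g ⁻¹' {b})) := by
  rw [← one_smul ℝ b, ← setOf_mk_mem_homogenization f g b zero_le_one]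
  exact (isClosed_homogenization f g b).preimage (by fun_prop)

theorem asymptoticCone_image_polyhedron_subset [Fintype ι] :
    asymptoticCone ℝ (f '' (Set.Ici 0 ∩ g ⁻¹' {b})) ⊆ f '' (Set.Ici 0 ∩ g ⁻¹' {0}) := by
  rw [← one_smul ℝ b, ← setOf_mk_mem_homogenization f g b zero_le_one, ← zero_smul ℝ b,
    ← setOf_mk_mem_homogenization f g b le_rfl]
  exact asymptoticCone_setOf_mk_one_subset (isClosed_homogenization f g b)
    fun _ hc _ ↦ smul_mem_homogenization f g b hc

end Homogenization

theorem stmt14_general (k n m : ℕ) (K : Set (Fin k → ℝ))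
    (hKcone : ∀ (c : ℝ), 0 ≤ c → ∀ x ∈ K, c • x ∈ K)
    (hKclosed : IsClosed K) (hKconvex : Convex ℝ K)
    (L : Matrix (Fin k) (Fin n) ℝ) (A : Matrix (Fin m) (Fin n) ℝ) (b : Fin m → ℝ)
    (hrec : {e : Fin k → ℝ | ∃ x : Fin n → ℝ, (∀ i, 0 ≤ x i) ∧ A *ᵥ x = 0 ∧ L *ᵥ x = e}
      ∩ (-K) = {0}) :
    IsClosed ({w : Fin k → ℝ | ∃ x : Fin n → ℝ, ((∀ i, 0 ≤ x i) ∧ A *ᵥ x = b) ∧ L *ᵥ x = w} + K)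
    ∧ Convex ℝ ({w : Fin k → ℝ | ∃ x : Fin n → ℝ, ((∀ i, 0 ≤ x i) ∧ A *ᵥ x = b) ∧ L *ᵥ x = w} + K) := by
  have hS : {w : Fin k → ℝ | ∃ x : Fin n → ℝ, ((∀ i, 0 ≤ x i) ∧ A *ᵥ x = b) ∧ L *ᵥ x = w} =
      L.mulVecLin '' (Set.Ici 0 ∩ A.mulVecLin ⁻¹' {b}) := rfl
  have hR : {e : Fin k → ℝ | ∃ x : Fin n → ℝ, (∀ i, 0 ≤ x i) ∧ A *ᵥ x = 0 ∧ L *ᵥ x = e} =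
      L.mulVecLin '' (Set.Ici 0 ∩ A.mulVecLin ⁻¹' {0}) := by
    ext e
    simp [Pi.le_def, and_assoc]
  have hasymp :
      asymptoticCone ℝ (L.mulVecLin '' (Set.Ici 0 ∩ A.mulVecLin ⁻¹' {b})) ∩ -K ⊆ {0} :=
    hrec ▸ hR ▸ Set.inter_subset_inter_left _ (asymptoticCone_image_polyhedron_subset _ _ b)
  rw [hS]
  exact ⟨(isClosed_image_polyhedron _ _ b).add_of_asymptoticCone_inter_neg_subset hKclosed hKcone
      hasymp,
    (((convex_Ici 0).inter ((convex_singleton b).linear_preimage _)).linear_image _).add hKconvex⟩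

theorem stmt14 (k n m : ℕ) (K : Set (Fin k → ℝ))
    (hKcone : ∀ (c : ℝ), 0 ≤ c → ∀ x ∈ K, c • x ∈ K)
    (hKclosed : IsClosed K) (hKconvex : Convex ℝ K)
    (hKpointed : K ∩ (-K) = {0})
    (hKne : K ≠ {0}) (hKuniv : K ≠ Set.univ)
    (L : Matrix (Fin k) (Fin n) ℝ) (A : Matrix (Fin m) (Fin n) ℝ) (b : Fin m → ℝ)
    (hA : ∃ x : Fin n → ℝ, (∀ i, 0 ≤ x i) ∧ A *ᵥ x = b)
    (hrec : {e : Fin k → ℝ | ∃ x : Fin n → ℝ, (∀ i, 0 ≤ x i) ∧ A *ᵥ x = 0 ∧ L *ᵥ x = e}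
      ∩ (-K) = {0}) :
    IsClosed ({w : Fin k → ℝ | ∃ x : Fin n → ℝ, ((∀ i, 0 ≤ x i) ∧ A *ᵥ x = b) ∧ L *ᵥ x = w} + K)
    ∧ Convex ℝ ({w : Fin k → ℝ | ∃ x : Fin n → ℝ, ((∀ i, 0 ≤ x i) ∧ A *ᵥ x = b) ∧ L *ᵥ x = w} + K) :=
  stmt14_general k n m K hKcone hKclosed hKconvex L A b hrec
end

section
/- Let n = 1, k = 2, m = 2, L = (0,0)ᵀ ∈ ℝ^{2×1}, A = (1,1)ᵀ ∈ ℝ^{2×1}, b = (−1,−1)ᵀ, K = ℝ²_+. Then (−1,−1)ᵀ ∈ h^L(ℬ^L) but (−1,−1)ᵀ ∉ h(ℬ), where ℬ^L = {(λ, z, v) ∈ int(ℝ²_+) × ℝ² × ℝ² : λᵀv − zᵀb ≤ 0, Lᵀλ − Aᵀz ∈ ℝ_+} with h^L(λ, z, v) = v, and ℬ = {(λ, U, v) ∈ int(ℝ²_+) × ℝ^{2×2} × ℝ² : λᵀv = 0, (L − UA)ᵀλ ∈ ℝ_+} with h(λ, U, v) = Ub + v. Hence the inclusion h(ℬ) ⊆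 h^L(ℬ^L) can be strict. -/
open Matrix

/-! The witness `λ = (1, 1)`, `z = v = (-1, -1)` puts `(-1, -1)` in `h^L(ℬ^L)`. For `h(ℬ)`, write
`b = A x` with `x = -1 ≤ 0`: then `λᵀ(U b + v) = λᵀ L x - ((L - U A)ᵀ λ)ᵀ x ≥ λᵀ L x = 0`, since
`λᵀ v = 0` and `(L - U A)ᵀ λ ≥ 0`, whereas `λᵀ (-1, -1) < 0` for `λ > 0`. -/

theorem dotProduct_mulVec_le_of_transpose_mulVec_nonneg {R m k n : Type*}
    [CommRing R] [PartialOrder R] [IsOrderedRing R] [Fintype m] [Fintype k] [Fintype n]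
    (L : Matrix m n R) (A : Matrix k n R) (U : Matrix m k R) (l v : m → R) (x : n → R)
    (hx : x ≤ 0) (hlv : l ⬝ᵥ v = 0) (hU : 0 ≤ (L - U * A)ᵀ *ᵥ l) :
    l ⬝ᵥ (L *ᵥ x) ≤ l ⬝ᵥ (U *ᵥ (A *ᵥ x) + v) := by
  have hgap : ((L - U * A)ᵀ *ᵥ l) ⬝ᵥ x ≤ 0 :=
    Finset.sum_nonpos fun i _ => mul_nonpos_of_nonneg_of_nonpos (hU i) (hx i)
  have hsplit : l ⬝ᵥ (U *ᵥ (A *ᵥ x) + v) = l ⬝ᵥ (L *ᵥ x) - ((L - U * A)ᵀ *ᵥ l) ⬝ᵥ x := by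
    rw [dotProduct_add, hlv, add_zero, mulVec_transpose, ← dotProduct_mulVec, sub_mulVec,
      dotProduct_sub, mulVec_mulVec, sub_sub_cancel]
  rw [hsplit]
  exact le_sub_self_iff _ |>.mpr hgap

theorem stmt18
    (L : Matrix (Fin 2) (Fin 1) ℝ) (A : Matrix (Fin 2) (Fin 1) ℝ) (b : Fin 2 → ℝ)
    (hL : L = fun _ _ => 0) (hA : A = fun _ _ => 1) (hb : b = ![-1, -1]) :
    (![-1, -1] : Fin 2 → ℝ) ∈
      {w : Fin 2 → ℝ | ∃ (l : Fin 2 → ℝ) (z : Fin 2 → ℝ) (v : Fin 2 → ℝ),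
        ((∀ i, 0 < l i) ∧ l ⬝ᵥ v - z ⬝ᵥ b ≤ 0 ∧
          ∀ i, 0 ≤ (Lᵀ *ᵥ l - Aᵀ *ᵥ z) i) ∧ v = w} ∧
    (![-1, -1] : Fin 2 → ℝ) ∉
      {w : Fin 2 → ℝ | ∃ (l : Fin 2 → ℝ) (U : Matrix (Fin 2) (Fin 2) ℝ) (v : Fin 2 → ℝ),
        ((∀ i, 0 < l i) ∧ l ⬝ᵥ v = 0 ∧
          ∀ i, 0 ≤ ((L - U * A)ᵀ *ᵥ l) i) ∧ U *ᵥ b + v = w} := by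
  subst hL hA hb
  constructor
  · refine ⟨![1, 1], ![-1, -1], ![-1, -1], ⟨fun i => ?_, ?_, fun i => ?_⟩, rfl⟩
    · fin_cases i <;> norm_num
    · norm_num [dotProduct, Fin.sum_univ_two]
    · fin_cases i; norm_num [mulVec, dotProduct, Fin.sum_univ_two, transpose, vecHead, vecTail]
  · rintro ⟨l, U, v, ⟨hl, hlv, hU⟩, hw⟩
    have hbA : (![-1, -1] : Fin 2 → ℝ) = (fun _ _ => 1 : Matrix (Fin 2) (Fin 1) ℝ) *ᵥ ![-1] := by
      ext i; fin_cases i <;> simp [mulVec, dotProduct]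
    have hhalf := dotProduct_mulVec_le_of_transpose_mulVec_nonneg _ _ U l v ![-1]
      (fun _ => by simp) hlv hU
    rw [← hbA, hw] at hhalf
    have hsum : l 1 ≤ -l 0 := by simpa [dotProduct, mulVec, Fin.sum_univ_two] using hhalf
    linarith [hl 0, hl 1]
end
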